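/- arXiv:2505.23389 — 3 statements merged into one kernel-verified Lean document; each statement's English description precedes it below -/
import Mathlib

section
/- Let $T \ge 1$, $\alpha \in [0,1]$, $B \ge 0$, and $\eta > 0$. Let $(s_t)_{t=1}^T$ be reals with $0 \le s_t \le B$, and let the thresholds evolve as $\lambda_{t+1} = \lambda_t + \eta (\mathbb{1}\{s_t > \lambda_t\} - \alpha)$ with $\lambda_1 \in [-\eta \alpha,\; B + \eta(1-\alpha)]$. Then the empirical miscoverage rate satisfies $\left| \frac{1}{T} \sum_{t=1}^T \mathbb{1}\{s_t > \lambda_t\} - \alpha \right| \le \frac{B + \eta}{T \eta}$; in particular the long-term coverage loss converges to $\alpha$ at rate $\mathcal{O}(1/T)$. -/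
/-- Long-term coverage control at rate `O(1/T)`: with a constant step size and
an initialization in the invariant interval, the empirical miscoverage rate is
within `(B + η)/(T η)` of the target `α`. -/
theorem empirical_miscoverage_rate_bound
    (T : ℕ) (hT : 1 ≤ T) (α : ℝ) (hα : 0 ≤ α ∧ α ≤ 1)
    (B : ℝ) (hB : 0 ≤ B) (η : ℝ) (hη : 0 < η)
    (s lam : ℕ → ℝ)
    (hs : ∀ t, 1 ≤ t → t ≤ T → 0 ≤ s t ∧ s t ≤ B)
    (hupd : ∀ t, 1 ≤ t → t ≤ T →
      lam (t + 1) = lam t + η * ((if s t > lam t then (1 : ℝ) else 0) - α))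
    (hinit : lam 1 ∈ Set.Icc (-(η * α)) (B + η * (1 - α))) :
    |(1 / (T : ℝ)) * ∑ t ∈ Finset.Icc 1 T,
        (if s t > lam t then (1 : ℝ) else 0) - α| ≤ (B + η) / (T * η) := by
  obtain ⟨hα0, hα1⟩ := hα
  -- invariance
  have hinv : ∀ t, 1 ≤ t → t ≤ T + 1 →
      -(η * α) ≤ lam t ∧ lam t ≤ B + η * (1 - α) := by
    intro t
    induction t with
    | zero => intro h; omega
    | succ n ih =>
      intro _ hle
      rcases Nat.eq_zero_or_pos n with h1 | h1
      · subst h1; exact ⟨hinit.1, hinit.2⟩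
      · have hn1 : 1 ≤ n := h1
        have hnT : n ≤ T := by omega
        obtain ⟨hlo, hhi⟩ := ih hn1 (by omega)
        obtain ⟨hs0, hsB⟩ := hs n hn1 hnT
        rw [hupd n hn1 hnT]
        by_cases h : s n > lam n
        · rw [if_pos h]
          constructor
          · nlinarith
          · nlinarith
        · rw [if_neg h]
          push_neg at h
          constructor
          · nlinarith
          · nlinarith
  -- telescoping
  have htel : ∑ t ∈ Finset.Icc 1 T,
      (η * ((if s t > lam t then (1 : ℝ) else 0) - α)) = lam (T + 1) - lam 1 := by
    have : ∀ n, n ≤ T → ∑ t ∈ Finset.Icc 1 n,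
        (η * ((if s t > lam t then (1 : ℝ) else 0) - α)) = lam (n + 1) - lam 1 := by
      intro n
      induction n with
      | zero => intro _; simp
      | succ m ih =>
        intro hm
        rw [Finset.sum_Icc_succ_top (by omega), ih (by omega),
          hupd (m + 1) (by omega) hm]
        ring
    exact this T le_rfl
  have hcard : (Finset.Icc 1 T).card = T := by simp
  simp only [mul_sub, Finset.sum_sub_distrib, Finset.sum_const, hcard, nsmul_eq_mul,
    ← Finset.mul_sum] at htel
  -- htel : η * ∑ L - T * (η * α) = lam (T+1) - lam 1
  have hT0 : (0 : ℝ) < T := by exact_mod_cast hT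
  have hb1 := (hinv (T + 1) (by omega) le_rfl)
  have hb2 := hinit
  set S : ℝ := ∑ t ∈ Finset.Icc 1 T, (if s t > lam t then (1 : ℝ) else 0) with hS
  have heq : (1 / (T : ℝ)) * S - α = (lam (T + 1) - lam 1) / (T * η) := by
    rw [← htel]
    field_simp
  have hpos : (0 : ℝ) < (T : ℝ) * η := by positivity
  rw [heq, abs_div, abs_of_pos hpos]
  have hnum : |lam (T + 1) - lam 1| ≤ B + η := by
    rw [abs_le]
    constructor
    · nlinarith [hb1.1, hb2.2]
    · nlinarith [hb1.2, hb2.1]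
  gcongr
end

section
/- Let $L_{\max} > 0$, $c > 0$, $\alpha \in [0, L_{\max}]$, and $\eta_{\max} > 0$. For each $t \ge 1$ let $\ell_t : \mathbb{R} \to \mathbb{R}$ be a nonincreasing function with $0 \le \ell_t(\lambda) \le L_{\max}$ for all $\lambda$, $\ell_t(\lambda) = L_{\max}$ whenever $\lambda \le 0$, and $\ell_t(\lambda) = 0$ whenever $\lambda \ge c$. Let $(\eta_t)_{t \ge 1}$ satisfy $0 < \eta_t \le \eta_{\max}$, and let the thresholds evolve as $\lambda_{t+1} = \lambda_t + \eta_t (\ell_t(\lambda_t) - \alpha)$. If $\lambda_1 \in [-\eta_{\max} \alpha,\; c + \eta_{\max}(L_{\max} - \alpha)]$, then $\lambda_t \in [-\eta_{\max} \alpha,\; c + \eta_{\max}(L_{\max} - \alpha)]$ for every $t \ge 1$. -/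
/-- Invariance of the interval `[-η_max α, c + η_max (L_max - α)]` under the
online update with a saturating monotone loss family. -/
theorem threshold_interval_invariant_saturating
    (Lmax : ℝ) (hLmax : 0 < Lmax) (c : ℝ) (hc : 0 < c)
    (α : ℝ) (hα : 0 ≤ α ∧ α ≤ Lmax)
    (ηmax : ℝ) (hηmax : 0 < ηmax)
    (ℓ : ℕ → ℝ → ℝ)
    (hmono : ∀ t, 1 ≤ t → ∀ x y : ℝ, x ≤ y → ℓ t y ≤ ℓ t x)
    (hbdd : ∀ t, 1 ≤ t → ∀ x : ℝ, 0 ≤ ℓ t x ∧ ℓ t x ≤ Lmax)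
    (hsat0 : ∀ t, 1 ≤ t → ∀ x : ℝ, x ≤ 0 → ℓ t x = Lmax)
    (hsatc : ∀ t, 1 ≤ t → ∀ x : ℝ, c ≤ x → ℓ t x = 0)
    (η lam : ℕ → ℝ)
    (hη : ∀ t, 1 ≤ t → 0 < η t ∧ η t ≤ ηmax)
    (hupd : ∀ t, 1 ≤ t → lam (t + 1) = lam t + η t * (ℓ t (lam t) - α))
    (hinit : lam 1 ∈ Set.Icc (-(ηmax * α)) (c + ηmax * (Lmax - α))) :
    ∀ t, 1 ≤ t → lam t ∈ Set.Icc (-(ηmax * α)) (c + ηmax * (Lmax - α)) := by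
  intro t ht
  induction t, ht using Nat.le_induction with
  | base => exact hinit
  | succ n hn ih =>
    obtain ⟨ihl, ihu⟩ := ih
    obtain ⟨hηpos, hηle⟩ := hη n hn
    obtain ⟨hℓ0, hℓL⟩ := hbdd n hn (lam n)
    rw [hupd n hn]
    constructor
    · rcases le_or_gt α (ℓ n (lam n)) with h | h
      · nlinarith
      · have hpos : 0 < lam n := by
          by_contra hle
          push_neg at hle
          have := hsat0 n hn (lam n) hle
          linarith [hα.2]
        nlinarith
    · rcases le_or_gt (ℓ n (lam n)) α with h | h
      · nlinarith
      · have hlt : lam n < c := by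
          by_contra hle
          push_neg at hle
          have := hsatc n hn (lam n) hle
          linarith [hα.1]
        nlinarith [hα.2]
end

section
/- Let $T \ge 1$, $L_{\max} > 0$, $c > 0$, and $\alpha \in [0, L_{\max}]$. For each $1 \le t \le T$ let $\ell_t : \mathbb{R} \to \mathbb{R}$ be a nonincreasing function with $0 \le \ell_t(\lambda) \le L_{\max}$ for all $\lambda$, $\ell_t(\lambda) = L_{\max}$ for $\lambda \le 0$, and $\ell_t(\lambda) = 0$ for $\lambda \ge c$. Let $(\eta_t)_{t=1}^T$ be positive and nonincreasing, and let the thresholds evolve as $\lambda_{t+1} = \lambda_t + \eta_t (\ell_t(\lambda_t) - \alpha)$ with $\lambda_1 \in [-\eta_1 \alpha,\; c + \eta_1(L_{\max} - \alpha)]$. Then the time-averaged incurred loss $\bar{L}(T) = \frac{1}{T} \sum_{t=1}^T \ell_t(\lambda_t)$ satisfies $\left| \bar{L}(T) - \alpha \right| \le \frac{2 (c + \eta_1 L_{\max})}{T \eta_T}$. -/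
/-!
The update keeps `λ_t` in `[-η₁α, c + η₁(L_max - α)]`: below `0` the loss is `L_max ≥ α`, so
`λ` moves up, above `c` it is `0`, so `λ` moves down, and a step moves `λ` by at most `η₁α` down
and `η₁(L_max - α)` up. Hence `|λ_t| ≤ c + η₁ L_max`. Since `ℓ_t(λ_t) - α = (λ_{t+1} - λ_t)/η_t`,
Abel summation bounds the sum of these increments by `2(c + η₁ L_max)/η_T` when the step sizes
are nonincreasing.
-/

open Finset

lemma saturating_update_mem_Icc {L c α η η₁ x v : ℝ} (hα₀ : 0 ≤ α) (hαL : α ≤ L)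
    (hv₀ : 0 ≤ v) (hvL : v ≤ L) (hv_of_nonpos : x ≤ 0 → v = L) (hv_of_ge : c ≤ x → v = 0)
    (hη : 0 ≤ η) (hηη₁ : η ≤ η₁)
    (hx : x ∈ Set.Icc (-(η₁ * α)) (c + η₁ * (L - α))) :
    x + η * (v - α) ∈ Set.Icc (-(η₁ * α)) (c + η₁ * (L - α)) := by
  obtain ⟨hxlo, hxhi⟩ := hx
  constructor
  · rcases le_or_gt x 0 with hx0 | hx0
    · rw [hv_of_nonpos hx0]
      nlinarith
    · nlinarith
  · rcases le_or_gt c x with hcx | hcx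
    · rw [hv_of_ge hcx]
      nlinarith
    · nlinarith

lemma abs_le_of_mem_Icc {L c α η₁ x : ℝ} (hc : 0 ≤ c) (hη₁ : 0 ≤ η₁) (hα₀ : 0 ≤ α)
    (hαL : α ≤ L) (hx : x ∈ Set.Icc (-(η₁ * α)) (c + η₁ * (L - α))) : |x| ≤ c + η₁ * L := by
  obtain ⟨hxlo, hxhi⟩ := hx
  exact abs_le.2 ⟨by nlinarith, by nlinarith⟩

lemma forall_mem_of_step_mem {β : Type*} {s : Set β} {x : ℕ → β} {T : ℕ} (h₁ : x 1 ∈ s)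
    (hstep : ∀ t, 1 ≤ t → t ≤ T → x t ∈ s → x (t + 1) ∈ s) :
    ∀ n ∈ Set.Icc 1 (T + 1), x n ∈ s := by
  rintro n ⟨hn₁, hnT⟩
  induction n, hn₁ using Nat.le_induction with
  | base => exact h₁
  | succ n hn ih => exact hstep n hn (by omega) (ih (by omega))

lemma abs_sum_increment_div_sub_le {η lam : ℕ → ℝ} {D : ℝ} {n : ℕ} (hn : 1 ≤ n)
    (hη : ∀ t ∈ Set.Icc 1 n, 0 < η t) (hanti : AntitoneOn η (Set.Icc 1 n))
    (hlam : ∀ t ∈ Set.Icc 1 n, |lam t| ≤ D) :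
    |∑ t ∈ Icc 1 n, (lam (t + 1) - lam t) / η t - lam (n + 1) / η n| ≤ D / η n := by
  induction n, hn using Nat.le_induction with
  | base =>
    have hη₁ := hη 1 ⟨le_rfl, le_rfl⟩
    rw [Icc_self, sum_singleton, sub_div, sub_sub_cancel_left, abs_neg, abs_div, abs_of_pos hη₁]
    exact div_le_div_of_nonneg_right (hlam 1 ⟨le_rfl, le_rfl⟩) hη₁.le
  | succ n hn ih =>
    have hsub : Set.Icc 1 n ⊆ Set.Icc 1 (n + 1) := Set.Icc_subset_Icc_right n.le_succ
    have hn_mem : n ∈ Set.Icc 1 (n + 1) := ⟨hn, n.le_succ⟩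
    have hn1_mem : n + 1 ∈ Set.Icc 1 (n + 1) := ⟨by omega, le_rfl⟩
    have hinv : 1 / η n ≤ 1 / η (n + 1) :=
      one_div_le_one_div_of_le (hη _ hn1_mem) (hanti hn_mem hn1_mem n.le_succ)
    have hlast : |lam (n + 1) * (1 / η n - 1 / η (n + 1))| ≤ D * (1 / η (n + 1) - 1 / η n) := by
      rw [abs_mul, abs_sub_comm, abs_of_nonneg (sub_nonneg.2 hinv)]
      exact mul_le_mul_of_nonneg_right (hlam _ hn1_mem) (sub_nonneg.2 hinv)
    have ih' := ih (fun t ht => hη t (hsub ht)) (hanti.mono hsub) (fun t ht => hlam t (hsub ht))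
    -- Abel summation: the step adds `λ_{n+1}(1/η_n - 1/η_{n+1})`, of size at most
    -- `D(1/η_{n+1} - 1/η_n)` since `η` is nonincreasing, and these telescope.
    have hsplit : ∑ t ∈ Icc 1 (n + 1), (lam (t + 1) - lam t) / η t - lam (n + 1 + 1) / η (n + 1)
        = (∑ t ∈ Icc 1 n, (lam (t + 1) - lam t) / η t - lam (n + 1) / η n)
          + lam (n + 1) * (1 / η n - 1 / η (n + 1)) := by
      rw [sum_Icc_succ_top (by omega)]
      ring
    calc _ = _ := congrArg abs hsplit
      _ ≤ D / η n + D * (1 / η (n + 1) - 1 / η n) := (abs_add_le _ _).trans (add_le_add ih' hlast)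
      _ = D / η (n + 1) := by ring

lemma abs_sum_increment_div_le {η lam : ℕ → ℝ} {D : ℝ} {n : ℕ} (hn : 1 ≤ n)
    (hη : ∀ t ∈ Set.Icc 1 n, 0 < η t) (hanti : AntitoneOn η (Set.Icc 1 n))
    (hlam : ∀ t ∈ Set.Icc 1 (n + 1), |lam t| ≤ D) :
    |∑ t ∈ Icc 1 n, (lam (t + 1) - lam t) / η t| ≤ 2 * D / η n := by
  have hηn := hη n ⟨hn, le_rfl⟩
  have hsub : Set.Icc 1 n ⊆ Set.Icc 1 (n + 1) := Set.Icc_subset_Icc_right n.le_succ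
  have hbody := abs_sum_increment_div_sub_le hn hη hanti fun t ht => hlam t (hsub ht)
  have hlast : |lam (n + 1) / η n| ≤ D / η n := by
    rw [abs_div, abs_of_pos hηn]
    exact div_le_div_of_nonneg_right (hlam _ ⟨by omega, le_rfl⟩) hηn.le
  have htri := abs_sub_abs_le_abs_sub
    (∑ t ∈ Icc 1 n, (lam (t + 1) - lam t) / η t) (lam (n + 1) / η n)
  rw [two_mul, add_div]
  linarith

lemma average_sub_eq_sum_increment_div {T : ℕ} {α : ℝ} {v η lam : ℕ → ℝ} (hT : T ≠ 0)
    (hη : ∀ t ∈ Icc 1 T, η t ≠ 0) (hupd : ∀ t ∈ Icc 1 T, lam (t + 1) = lam t + η t * (v t - α)) :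
    (1 / (T : ℝ)) * ∑ t ∈ Icc 1 T, v t - α = (∑ t ∈ Icc 1 T, (lam (t + 1) - lam t) / η t) / T := by
  have hincr : ∀ t ∈ Icc 1 T, (lam (t + 1) - lam t) / η t = v t - α := fun t ht => by
    rw [hupd t ht, add_sub_cancel_left, mul_div_cancel_left₀ _ (hη t ht)]
  rw [sum_congr rfl hincr, sum_sub_distrib, sum_const, Nat.card_Icc, Nat.add_sub_cancel,
    nsmul_eq_mul]
  have hT' : (T : ℝ) ≠ 0 := Nat.cast_ne_zero.2 hT
  field_simp

theorem long_term_loss_control_saturating_general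
    (T : ℕ) (hT : 1 ≤ T)
    (Lmax : ℝ) (c : ℝ) (hc : 0 < c)
    (α : ℝ) (hα : 0 ≤ α ∧ α ≤ Lmax)
    (ℓ : ℕ → ℝ → ℝ)
    (hbdd : ∀ t, 1 ≤ t → t ≤ T → ∀ x : ℝ, 0 ≤ ℓ t x ∧ ℓ t x ≤ Lmax)
    (hsat0 : ∀ t, 1 ≤ t → t ≤ T → ∀ x : ℝ, x ≤ 0 → ℓ t x = Lmax)
    (hsatc : ∀ t, 1 ≤ t → t ≤ T → ∀ x : ℝ, c ≤ x → ℓ t x = 0)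
    (η lam : ℕ → ℝ)
    (hη : ∀ t, 1 ≤ t → t ≤ T → 0 < η t)
    (hηmono : ∀ t, 1 ≤ t → t ≤ T - 1 → η (t + 1) ≤ η t)
    (hupd : ∀ t, 1 ≤ t → t ≤ T →
      lam (t + 1) = lam t + η t * (ℓ t (lam t) - α))
    (hinit : lam 1 ∈ Set.Icc (-(η 1 * α)) (c + η 1 * (Lmax - α))) :
    |(1 / (T : ℝ)) * ∑ t ∈ Finset.Icc 1 T, ℓ t (lam t) - α|
      ≤ 2 * (c + η 1 * Lmax) / (T * η T) := by
  obtain ⟨hα₀, hαL⟩ := hα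
  have hη' : ∀ t ∈ Set.Icc 1 T, 0 < η t := fun t ht => hη t ht.1 ht.2
  have hanti : AntitoneOn η (Set.Icc 1 T) :=
    antitoneOn_of_succ_le Set.ordConnected_Icc fun t _ ht ht' =>
      hηmono t ht.1 (by simp only [Order.succ_eq_add_one, Set.mem_Icc] at ht'; omega)
  have hmem := forall_mem_of_step_mem hinit fun t ht₁ htT hlam => by
    rw [hupd t ht₁ htT]
    exact saturating_update_mem_Icc hα₀ hαL (hbdd t ht₁ htT _).1 (hbdd t ht₁ htT _).2
      (hsat0 t ht₁ htT _) (hsatc t ht₁ htT _) (hη t ht₁ htT).le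
      (hanti ⟨le_rfl, hT⟩ ⟨ht₁, htT⟩ ht₁) hlam
  have hbound : ∀ n ∈ Set.Icc 1 (T + 1), |lam n| ≤ c + η 1 * Lmax := fun n hn =>
    abs_le_of_mem_Icc hc.le (hη 1 le_rfl hT).le hα₀ hαL (hmem n hn)
  have havg := average_sub_eq_sum_increment_div (by omega)
    (fun t ht => (hη t (mem_Icc.1 ht).1 (mem_Icc.1 ht).2).ne')
    fun t ht => hupd t (mem_Icc.1 ht).1 (mem_Icc.1 ht).2
  have hT' : (0 : ℝ) < T := by exact_mod_cast hT
  calc |(1 / (T : ℝ)) * ∑ t ∈ Icc 1 T, ℓ t (lam t) - α|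
      = |∑ t ∈ Icc 1 T, (lam (t + 1) - lam t) / η t| / T := by
        rw [havg, abs_div, abs_of_pos hT']
    _ ≤ 2 * (c + η 1 * Lmax) / η T / T := by
        gcongr
        exact abs_sum_increment_div_le hT hη' hanti hbound
    _ = _ := by rw [div_div, mul_comm (η T)]

/-- Long-term loss control for a saturating monotone loss family with
nonincreasing step sizes: the time-averaged incurred loss is within
`2(c + η_1 L_max)/(T η_T)` of the target `α`. -/
theorem long_term_loss_control_saturating
    (T : ℕ) (hT : 1 ≤ T)
    (Lmax : ℝ) (hLmax : 0 < Lmax) (c : ℝ) (hc : 0 < c)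
    (α : ℝ) (hα : 0 ≤ α ∧ α ≤ Lmax)
    (ℓ : ℕ → ℝ → ℝ)
    (hmono : ∀ t, 1 ≤ t → t ≤ T → ∀ x y : ℝ, x ≤ y → ℓ t y ≤ ℓ t x)
    (hbdd : ∀ t, 1 ≤ t → t ≤ T → ∀ x : ℝ, 0 ≤ ℓ t x ∧ ℓ t x ≤ Lmax)
    (hsat0 : ∀ t, 1 ≤ t → t ≤ T → ∀ x : ℝ, x ≤ 0 → ℓ t x = Lmax)
    (hsatc : ∀ t, 1 ≤ t → t ≤ T → ∀ x : ℝ, c ≤ x → ℓ t x = 0)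
    (η lam : ℕ → ℝ)
    (hη : ∀ t, 1 ≤ t → t ≤ T → 0 < η t)
    (hηmono : ∀ t, 1 ≤ t → t ≤ T - 1 → η (t + 1) ≤ η t)
    (hupd : ∀ t, 1 ≤ t → t ≤ T →
      lam (t + 1) = lam t + η t * (ℓ t (lam t) - α))
    (hinit : lam 1 ∈ Set.Icc (-(η 1 * α)) (c + η 1 * (Lmax - α))) :
    |(1 / (T : ℝ)) * ∑ t ∈ Finset.Icc 1 T, ℓ t (lam t) - α|
      ≤ 2 * (c + η 1 * Lmax) / (T * η T) :=
  long_term_loss_control_saturating_general T hT Lmax c hc α hα ℓ hbdd hsat0 hsatc η lam hη hηmono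
    hupd hinit
end
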